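/- arXiv:2508.13722 — 11 statements merged into one kernel-verified Lean document; each statement's English description precedes it below -/
import Mathlib

section
/- Let E be a real inner product space that is also an ordered vector space (the order is translation-invariant and invariant under multiplication by nonnegative scalars) whose order is directed (every two elements have a common upper bound). Then the following are equivalent: (i) every pair {x, 0} in E has a supremum, and the induced norm is a lattice norm in the sense that whenever s is the supremum of {x, -x}, t is the supremum of {y, -y}, and s ≤ t, then ‖x‖ ≤ ‖y‖; (ii) every x ∈ E has a unique best approximation P(x) from the positive cone E⁺ = {z ∈ E : 0 ≤ z}, and the map P is isotone (x ≤ y implies P(x) ≤ P(y)) and subadditive (P(x+y) ≤ P(x) + P(y) for all x, y). Moreover, in this case P(x) is the supremum of {x, 0} for every x ∈ E. -/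
/-- `p` is a best approximation to `x` from the set `A`. -/
def IsBestApprox {E : Type*} [NormedAddCommGroup E] (A : Set E) (x p : E) : Prop :=
  p ∈ A ∧ ∀ y ∈ A, ‖x - p‖ ≤ ‖x - y‖

/-!
Write `x⁺` for the supremum of `{x, 0}`; then `|x| = x⁺ + (x⁺ - x)` while `x = x⁺ - (x⁺ - x)`.
Once `x ↦ x⁺` exists, the lattice-norm condition and the best-approximation property of `x⁺` are
both equivalent to the same two inner-product conditions: the positive cone is acute
(`⟪u, v⟫ ≥ 0` for `u, v ≥ 0`) and `x⁺ ⊥ x⁺ - x`. For the norm this comes from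
`‖u - v‖ ≤ ‖u + v‖ ↔ ⟪u, v⟫ ≥ 0` and `‖|x|‖ = ‖x‖ ↔ x⁺ ⊥ x⁺ - x`; for the projection from the
variational inequality `⟪x - p, w - p⟫ ≤ 0` characterising best approximations from a convex set,
which for a cone splits into `⟪p - x, p⟫ = 0` and `⟪p - x, w⟫ ≥ 0` for all `w ≥ 0`.
Conversely, an isotone subadditive projection `P` is `x ↦ x⁺`: it fixes the cone, so for a common
upper bound `z` of `x` and `0` we get `z = P (x + (z - x)) ≤ P x + (z - x)`, i.e. `x ≤ P x`.
-/

open scoped InnerProductSpace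

theorem isLUB_pair_iff {α : Type*} [Preorder α] {a b s : α} :
    IsLUB {a, b} s ↔ a ≤ s ∧ b ≤ s ∧ ∀ c, a ≤ c → b ≤ c → s ≤ c := by
  simp [IsLUB, IsLeast, upperBounds_insert, upperBounds_singleton, lowerBounds, and_assoc]

section OrderedGroup

variable {G : Type*} [AddCommGroup G] [PartialOrder G]

theorem IsLUB.pair_smul {𝕜 : Type*} [Field 𝕜] [LinearOrder 𝕜] [IsStrictOrderedRing 𝕜]
    [Module 𝕜 G] [PosSMulMono 𝕜 G] {a b s : G} (h : IsLUB {a, b} s) {t : 𝕜} (ht : 0 < t) :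
    IsLUB {t • a, t • b} (t • s) := by
  simpa [Set.image_pair] using (OrderIso.smulRight ht).isLUB_image'.2 h

section PositivePart

variable {P : G → G} (hsup : ∀ x, IsLUB {x, 0} (P x))
include hsup

theorem le_of_isLUB_pair_zero (x : G) : x ≤ P x := (isLUB_pair_iff.1 (hsup x)).1

theorem nonneg_of_isLUB_pair_zero (x : G) : 0 ≤ P x := (isLUB_pair_iff.1 (hsup x)).2.1

theorem monotone_of_isLUB_pair_zero : Monotone P := fun x y hxy =>
  (isLUB_pair_iff.1 (hsup x)).2.2 _ (hxy.trans (le_of_isLUB_pair_zero hsup y))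
    (nonneg_of_isLUB_pair_zero hsup y)

variable [IsOrderedAddMonoid G]

theorem subadditive_of_isLUB_pair_zero (x y : G) : P (x + y) ≤ P x + P y :=
  (isLUB_pair_iff.1 (hsup (x + y))).2.2 _
    (add_le_add (le_of_isLUB_pair_zero hsup x) (le_of_isLUB_pair_zero hsup y))
    (add_nonneg (nonneg_of_isLUB_pair_zero hsup x) (nonneg_of_isLUB_pair_zero hsup y))

end PositivePart

variable [IsOrderedAddMonoid G]

theorem IsLUB.pair_add_right {a b s : G} (h : IsLUB {a, b} s) (c : G) :
    IsLUB {a + c, b + c} (s + c) := by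
  simpa [Set.image_pair] using (OrderIso.addRight c).isLUB_image'.2 h

theorem IsLUB.pair_neg_of_pair_zero [Module ℝ G] [PosSMulMono ℝ G] {x p : G}
    (h : IsLUB {x, 0} p) : IsLUB {x, -x} (p + (p - x)) := by
  have h2 := (h.pair_smul (two_pos : (0 : ℝ) < 2)).pair_add_right (-x)
  rwa [smul_zero, zero_add, two_smul, two_smul, add_neg_cancel_right, ← sub_eq_add_neg,
    add_sub_assoc] at h2

theorem isLUB_pair_neg_self {a : G} (ha : 0 ≤ a) : IsLUB {a, -a} a :=
  isLUB_pair_iff.2 ⟨le_rfl, (neg_nonpos.2 ha).trans ha, fun _ h _ => h⟩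

theorem isLUB_neg_pair_zero {a : G} (ha : 0 ≤ a) : IsLUB {-a, 0} 0 :=
  isLUB_pair_iff.2 ⟨neg_nonpos.2 ha, le_rfl, fun _ _ h => h⟩

theorem isLUB_pair_zero_of_subadditive [IsDirectedOrder G] {P : G → G}
    (hfix : ∀ z, 0 ≤ z → P z = z) (hnonneg : ∀ x, 0 ≤ P x) (hmono : Monotone P)
    (hsub : ∀ x y, P (x + y) ≤ P x + P y) (x : G) : IsLUB {x, 0} (P x) := by
  refine isLUB_pair_iff.2 ⟨?_, hnonneg x, fun c hxc hc => hfix c hc ▸ hmono hxc⟩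
  obtain ⟨z, hxz, hz⟩ := exists_ge_ge x 0
  have hz_le : z ≤ P x + (z - x) := by
    simpa [hfix z hz, hfix _ (sub_nonneg.2 hxz)] using hsub x (z - x)
  have := sub_nonneg.2 hz_le
  rwa [show P x + (z - x) - z = P x - x by abel, sub_nonneg] at this

end OrderedGroup

section BestApprox

variable {F : Type*} [NormedAddCommGroup F]

theorem isBestApprox_self {A : Set F} {z : F} (hz : z ∈ A) : IsBestApprox A z z :=
  ⟨hz, fun y _ => by simp⟩

variable [InnerProductSpace ℝ F]

theorem isBestApprox_iff_real_inner_le_zero {K : Set F} (hK : Convex ℝ K) {x p : F} :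
    IsBestApprox K x p ↔ p ∈ K ∧ ∀ w ∈ K, ⟪x - p, w - p⟫_ℝ ≤ 0 := by
  refine and_congr_right fun hp => ?_
  rw [← norm_eq_iInf_iff_real_inner_le_zero hK hp]
  have : Nonempty K := ⟨⟨p, hp⟩⟩
  have hbdd : BddBelow (Set.range fun w : K => ‖x - w‖) :=
    ⟨0, Set.forall_mem_range.2 fun _ => norm_nonneg _⟩
  constructor
  · exact fun h => le_antisymm (le_ciInf fun w => h w w.2) (ciInf_le hbdd ⟨p, hp⟩)
  · exact fun h w hw => h ▸ ciInf_le hbdd ⟨w, hw⟩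

theorem IsBestApprox.eq {K : Set F} (hK : Convex ℝ K) {x p q : F} (hp : IsBestApprox K x p)
    (hq : IsBestApprox K x q) : p = q := by
  rw [isBestApprox_iff_real_inner_le_zero hK] at hp hq
  have hpq : ⟪q - p, q - p⟫_ℝ = ⟪x - p, q - p⟫_ℝ + ⟪x - q, p - q⟫_ℝ := by
    rw [← neg_sub q p, inner_neg_right, ← sub_eq_add_neg, ← inner_sub_left, sub_sub_sub_cancel_left]
  have := real_inner_self_nonpos.1 (hpq ▸ add_nonpos (hp.2 q hq.1) (hq.2 p hp.1))
  exact (sub_eq_zero.1 this).symm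

theorem norm_sub_le_norm_add_iff_real_inner_nonneg (u v : F) :
    ‖u - v‖ ≤ ‖u + v‖ ↔ 0 ≤ ⟪u, v⟫_ℝ := by
  rw [← pow_le_pow_iff_left₀ (norm_nonneg _) (norm_nonneg _) two_ne_zero, norm_sub_sq_real,
    norm_add_sq_real]
  constructor <;> intro h <;> linarith

theorem real_inner_eq_zero_of_norm_sub_eq_norm_add {u v : F} (h : ‖u - v‖ = ‖u + v‖) :
    ⟪u, v⟫_ℝ = 0 := by
  have h2 := congrArg (· ^ 2) h
  simp only [norm_sub_sq_real, norm_add_sq_real] at h2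
  linarith

variable [PartialOrder F] [IsOrderedAddMonoid F]

theorem norm_le_norm_of_nonneg_of_le (hpos : ∀ u v : F, 0 ≤ u → 0 ≤ v → 0 ≤ ⟪u, v⟫_ℝ)
    {s t : F} (hs : 0 ≤ s) (hst : s ≤ t) : ‖s‖ ≤ ‖t‖ := by
  have h := hpos (t + s) (t - s) (add_nonneg (hs.trans hst) hs) (sub_nonneg.2 hst)
  rw [inner_add_left, inner_sub_right, inner_sub_right, real_inner_self_eq_norm_sq,
    real_inner_self_eq_norm_sq, real_inner_comm s t] at h
  exact (pow_le_pow_iff_left₀ (norm_nonneg _) (norm_nonneg _) two_ne_zero).1 (by linarith)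

variable [PosSMulMono ℝ F]

theorem isBestApprox_nonneg_iff {x p : F} :
    IsBestApprox {z | 0 ≤ z} x p ↔
      0 ≤ p ∧ ⟪p - x, p⟫_ℝ = 0 ∧ ∀ w, 0 ≤ w → 0 ≤ ⟪p - x, w⟫_ℝ := by
  rw [isBestApprox_iff_real_inner_le_zero (K := {z | 0 ≤ z}) (convex_Ici 0)]
  have key : ∀ w, ⟪x - p, w - p⟫_ℝ = ⟪p - x, p⟫_ℝ - ⟪p - x, w⟫_ℝ := fun w => by
    rw [← neg_sub p x, inner_neg_left, inner_sub_right]; ring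
  simp only [Set.mem_ofPred_eq, key, sub_nonpos]
  refine and_congr_right fun hp => ⟨fun h => ?_, fun ⟨horth, h⟩ w hw => horth ▸ h w hw⟩
  have h0 := h 0 le_rfl
  have h2 := h (p + p) (add_nonneg hp hp)
  rw [inner_zero_right] at h0
  rw [inner_add_right] at h2
  have horth : ⟪p - x, p⟫_ℝ = 0 := by linarith
  exact ⟨horth, fun w hw => horth ▸ h w hw⟩

end BestApprox

section PositiveCone

variable {E : Type*} [NormedAddCommGroup E] [InnerProductSpace ℝ E] [PartialOrder E]
  [IsOrderedAddMonoid E] [PosSMulMono ℝ E] {P : E → E} (hsup : ∀ x, IsLUB {x, 0} (P x))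
include hsup

theorem real_inner_nonneg_of_lattice_norm
    (hnorm : ∀ x y s t : E, IsLUB {x, -x} s → IsLUB {y, -y} t → s ≤ t → ‖x‖ ≤ ‖y‖)
    {u v : E} (hu : 0 ≤ u) (hv : 0 ≤ v) : 0 ≤ ⟪u, v⟫_ℝ := by
  have hPu : P (u - v) ≤ u := (isLUB_pair_iff.1 (hsup (u - v))).2.2 u (sub_le_self u hv) hu
  have habs : P (u - v) + (P (u - v) - (u - v)) ≤ u + v :=
    calc _ ≤ u + (u - (u - v)) := add_le_add hPu (sub_le_sub_right hPu _)
      _ = u + v := by abel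
  exact (norm_sub_le_norm_add_iff_real_inner_nonneg u v).1 <|
    hnorm _ _ _ _ (hsup _).pair_neg_of_pair_zero (isLUB_pair_neg_self (add_nonneg hu hv)) habs

theorem real_inner_sub_self_eq_zero_of_lattice_norm
    (hnorm : ∀ x y s t : E, IsLUB {x, -x} s → IsLUB {y, -y} t → s ≤ t → ‖x‖ ≤ ‖y‖)
    (x : E) : ⟪P x - x, P x⟫_ℝ = 0 := by
  have hx := (hsup x).pair_neg_of_pair_zero
  have habs := isLUB_pair_neg_self <| add_nonneg (nonneg_of_isLUB_pair_zero hsup x)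
    (sub_nonneg.2 (le_of_isLUB_pair_zero hsup x))
  rw [real_inner_comm]
  refine real_inner_eq_zero_of_norm_sub_eq_norm_add ?_
  rw [sub_sub_cancel]
  exact le_antisymm (hnorm _ _ _ _ hx habs le_rfl) (hnorm _ _ _ _ habs hx le_rfl)

theorem lattice_norm_iff_of_isLUB_pair_zero :
    (∀ x y s t : E, IsLUB {x, -x} s → IsLUB {y, -y} t → s ≤ t → ‖x‖ ≤ ‖y‖) ↔
      (∀ u v : E, 0 ≤ u → 0 ≤ v → 0 ≤ ⟪u, v⟫_ℝ) ∧ ∀ x, ⟪P x - x, P x⟫_ℝ = 0 := by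
  refine ⟨fun hnorm => ⟨fun u v => real_inner_nonneg_of_lattice_norm hsup hnorm,
    real_inner_sub_self_eq_zero_of_lattice_norm hsup hnorm⟩, fun ⟨hpos, horth⟩ => ?_⟩
  have habs : ∀ x s : E, IsLUB {x, -x} s → ‖s‖ = ‖x‖ ∧ 0 ≤ s := by
    intro x s hs
    obtain rfl := hs.unique (hsup x).pair_neg_of_pair_zero
    refine ⟨?_, add_nonneg (nonneg_of_isLUB_pair_zero hsup x)
      (sub_nonneg.2 (le_of_isLUB_pair_zero hsup x))⟩
    rw [← norm_sub_eq_norm_add (horth x), sub_sub_cancel]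
  intro x y s t hs ht hst
  rw [← (habs x s hs).1, ← (habs y t ht).1]
  exact norm_le_norm_of_nonneg_of_le hpos (habs x s hs).2 hst

theorem forall_isBestApprox_nonneg_iff_of_isLUB_pair_zero :
    (∀ x, IsBestApprox {z | 0 ≤ z} x (P x)) ↔
      (∀ u v : E, 0 ≤ u → 0 ≤ v → 0 ≤ ⟪u, v⟫_ℝ) ∧ ∀ x, ⟪P x - x, P x⟫_ℝ = 0 := by
  refine ⟨fun hba => ⟨fun u v hu hv => ?_, fun x => (isBestApprox_nonneg_iff.1 (hba x)).2.1⟩,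
    fun ⟨hpos, horth⟩ x => isBestApprox_nonneg_iff.2 ⟨nonneg_of_isLUB_pair_zero hsup x, horth x,
      fun w => hpos _ w (sub_nonneg.2 (le_of_isLUB_pair_zero hsup x))⟩⟩
  -- `P (-v) = 0`, so the variational inequality at `-v` tests `v` against `u`
  have h0 : P (-v) = 0 := (hsup (-v)).unique (isLUB_neg_pair_zero hv)
  have h := (isBestApprox_nonneg_iff.1 (hba (-v))).2.2 u hu
  rwa [h0, zero_sub, neg_neg, real_inner_comm] at h

end PositiveCone

theorem stmt_0 {E : Type*} [NormedAddCommGroup E] [InnerProductSpace ℝ E] [PartialOrder E]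
    (hadd : ∀ x y z : E, x ≤ y → x + z ≤ y + z)
    (hsmul : ∀ (t : ℝ) (x : E), 0 ≤ t → 0 ≤ x → 0 ≤ t • x)
    (hdir : ∀ x y : E, ∃ z : E, x ≤ z ∧ y ≤ z) :
    (((∀ x : E, ∃ s : E, IsLUB {x, 0} s) ∧
        (∀ x y s t : E, IsLUB {x, -x} s → IsLUB {y, -y} t → s ≤ t → ‖x‖ ≤ ‖y‖)) ↔
      (∃ P : E → E,
        (∀ x : E, IsBestApprox {z : E | 0 ≤ z} x (P x)) ∧
        (∀ x q : E, IsBestApprox {z : E | 0 ≤ z} x q → q = P x) ∧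
        (∀ x y : E, x ≤ y → P x ≤ P y) ∧
        (∀ x y : E, P (x + y) ≤ P x + P y))) ∧
    (∀ P : E → E,
      (∀ x : E, IsBestApprox {z : E | 0 ≤ z} x (P x)) →
      (∀ x q : E, IsBestApprox {z : E | 0 ≤ z} x q → q = P x) →
      (∀ x y : E, x ≤ y → P x ≤ P y) →
      (∀ x y : E, P (x + y) ≤ P x + P y) →
      ∀ x : E, IsLUB {x, 0} (P x)) := by
  have : IsOrderedAddMonoid E := { add_le_add_left := fun a b h c => hadd a b c h }
  have : PosSMulMono ℝ E := .of_smul_nonneg fun t ht x hx => hsmul t x ht hx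
  have : IsDirectedOrder E := ⟨hdir⟩
  have isLUB_of_proj : ∀ P : E → E, (∀ x, IsBestApprox {z | 0 ≤ z} x (P x)) →
      (∀ x q, IsBestApprox {z | 0 ≤ z} x q → q = P x) → (∀ x y, x ≤ y → P x ≤ P y) →
      (∀ x y, P (x + y) ≤ P x + P y) → ∀ x, IsLUB {x, 0} (P x) :=
    fun P hba huniq hmono hsub => isLUB_pair_zero_of_subadditive
      (fun z hz => (huniq z z (isBestApprox_self hz)).symm) (fun x => (hba x).1)
      (fun x y => hmono x y) hsub
  refine ⟨⟨fun ⟨hex, hnorm⟩ => ?_, fun ⟨P, hba, huniq, hmono, hsub⟩ => ?_⟩, isLUB_of_proj⟩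
  · choose P hsup using hex
    have hba := (forall_isBestApprox_nonneg_iff_of_isLUB_pair_zero hsup).2
      ((lattice_norm_iff_of_isLUB_pair_zero hsup).1 hnorm)
    exact ⟨P, hba, fun x q hq => hq.eq (convex_Ici 0) (hba x),
      fun x y h => monotone_of_isLUB_pair_zero hsup h,
      subadditive_of_isLUB_pair_zero hsup⟩
  · have hsup := isLUB_of_proj P hba huniq hmono hsub
    exact ⟨fun x => ⟨P x, hsup x⟩, (lattice_norm_iff_of_isLUB_pair_zero hsup).2
      ((forall_isBestApprox_nonneg_iff_of_isLUB_pair_zero hsup).1 hba)⟩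
end

section
/- Let E be an inner product lattice. Then for every x ∈ E, the positive part x⁺ is the unique best approximation to x from the positive cone E⁺ = {z ∈ E : 0 ≤ z}; that is, x⁺ ∈ E⁺, ‖x - x⁺‖ ≤ ‖x - y‖ for every y ∈ E⁺, and any y ∈ E⁺ satisfying ‖x - y‖ = ‖x - x⁺‖ equals x⁺. Consequently E⁺ is a Chebyshev set in E and the metric projection P_{E⁺} satisfies P_{E⁺}(x) = x⁺ for all x ∈ E, so P_{E⁺} is isotone and subadditive. -/
/-- In an inner product lattice, the positive part `x⁺ = x ⊔ 0` is the unique best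
approximation to `x` from the positive cone, and the resulting metric projection
`x ↦ x ⊔ 0` is isotone and subadditive. -/
theorem stmt_1 {E : Type*} [NormedAddCommGroup E] [InnerProductSpace ℝ E] [Lattice E]
    (hadd : ∀ x y z : E, x ≤ y → x + z ≤ y + z)
    (hsmul : ∀ (t : ℝ) (x : E), 0 ≤ t → 0 ≤ x → 0 ≤ t • x)
    (hlat : ∀ x y : E, x ⊔ (-x) ≤ y ⊔ (-y) → ‖x‖ ≤ ‖y‖) :
    (∀ x : E, IsBestApprox {z : E | 0 ≤ z} x (x ⊔ 0) ∧
      (∀ q : E, IsBestApprox {z : E | 0 ≤ z} x q → q = x ⊔ 0)) ∧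
    (∀ x y : E, x ≤ y → x ⊔ 0 ≤ y ⊔ 0) ∧
    (∀ x y : E, (x + y) ⊔ 0 ≤ x ⊔ 0 + y ⊔ 0) := by
  -- basic order facts
  have hneg : ∀ a : E, 0 ≤ a → -a ≤ 0 := by
    intro a h
    have := hadd 0 a (-a) h
    simpa using this
  have haddpos : ∀ a b : E, 0 ≤ a → 0 ≤ b → 0 ≤ a + b := by
    intro a b ha hb
    have h1 := hadd 0 a b ha
    simp only [zero_add] at h1
    exact hb.trans h1
  -- |b| ≥ 0
  have habs : ∀ b : E, (0:E) ≤ b ⊔ (-b) := by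
    intro b
    have h3 : b + (-b) ≤ (b ⊔ (-b)) + (-b) := hadd _ _ _ le_sup_left
    have h4 : (b ⊔ (-b)) + (-b) ≤ (b ⊔ (-b)) + (b ⊔ (-b)) := by
      have := hadd (-b) (b ⊔ (-b)) (b ⊔ (-b)) le_sup_right
      simpa [add_comm] using this
    have h5 : (0:E) ≤ (b ⊔ (-b)) + (b ⊔ (-b)) := by
      have := h3.trans h4
      simpa using this
    have h6 := hsmul (1/2) _ (by norm_num) h5
    have h7 : (1/2 : ℝ) • ((b ⊔ (-b)) + (b ⊔ (-b))) = b ⊔ (-b) := by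
      rw [← two_smul ℝ, smul_smul]
      norm_num
    rwa [h7] at h6
  -- sup translates
  have hsupadd : ∀ u v c : E, (u ⊔ v) + c = (u + c) ⊔ (v + c) := by
    intro u v c
    apply le_antisymm
    · have h1 : u ≤ ((u + c) ⊔ (v + c)) + (-c) := by
        have := hadd (u + c) ((u + c) ⊔ (v + c)) (-c) le_sup_left
        simpa [add_assoc] using this
      have h2 : v ≤ ((u + c) ⊔ (v + c)) + (-c) := by
        have := hadd (v + c) ((u + c) ⊔ (v + c)) (-c) le_sup_right
        simpa [add_assoc] using this
      have := hadd (u ⊔ v) _ c (sup_le h1 h2)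
      simpa [add_assoc] using this
    · exact sup_le (hadd u (u ⊔ v) c le_sup_left) (hadd v (u ⊔ v) c le_sup_right)
  -- |x - x⁺| = x⁻
  have hA : ∀ x : E, (x - x ⊔ 0) ⊔ (-(x - x ⊔ 0)) = (-x) ⊔ 0 := by
    intro x
    have h1 : -(x - x ⊔ 0) = (-x) ⊔ 0 := by
      have : (x ⊔ 0) + (-x) = (x + -x) ⊔ (0 + -x) := hsupadd x 0 (-x)
      simp only [add_neg_cancel, zero_add] at this
      rw [neg_sub, sub_eq_add_neg, this, sup_comm]
    rw [h1]
    have h2 : x - x ⊔ 0 ≤ (-x) ⊔ 0 := by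
      rw [show x - x ⊔ 0 = -((-x) ⊔ 0) by rw [← h1, neg_neg]]
      exact (hneg _ le_sup_right).trans le_sup_right
    exact sup_eq_right.mpr h2
  -- the key best-approximation inequality
  have key : ∀ x y : E, 0 ≤ y → ‖x - x ⊔ 0‖ ≤ ‖x - y‖ := by
    intro x y hy
    apply hlat
    rw [hA x]
    apply sup_le
    · have h1 : -x ≤ y + (-x) := by
        have := hadd 0 y (-x) hy
        simpa using this
      have h2 : y + (-x) = -(x - y) := by abel
      rw [h2] at h1
      exact h1.trans le_sup_right
    · exact habs _
  refine ⟨?_, ?_, ?_⟩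
  · intro x
    have hmem : (x ⊔ 0) ∈ {z : E | 0 ≤ z} := le_sup_right
    constructor
    · exact ⟨hmem, fun y hy => key x y hy⟩
    · intro q hq
      have hq0 : (0:E) ≤ q := hq.1
      have hd1 : ‖x - x ⊔ 0‖ ≤ ‖x - q‖ := key x q hq0
      have hd2 : ‖x - q‖ ≤ ‖x - x ⊔ 0‖ := hq.2 _ hmem
      have hd : ‖x - q‖ = ‖x - x ⊔ 0‖ := le_antisymm hd2 hd1
      set m : E := (1/2 : ℝ) • (x ⊔ 0 + q) with hm
      have hm0 : (0:E) ≤ m := hsmul _ _ (by norm_num) (haddpos _ _ le_sup_right hq0)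
      have hM : ‖x - x ⊔ 0‖ ≤ ‖x - m‖ := key x m hm0
      have hab : (x - x ⊔ 0) + (x - q) = (2:ℝ) • (x - m) := by
        rw [hm]
        rw [smul_sub, smul_smul]
        norm_num
        module
      have hpar := parallelogram_law_with_norm ℝ (x - x ⊔ 0) (x - q)
      rw [hab] at hpar
      have hsub : (x - x ⊔ 0) - (x - q) = q - x ⊔ 0 := by abel
      rw [hsub] at hpar
      rw [norm_smul] at hpar
      simp only [Real.norm_ofNat] at hpar
      have hn0 : (0:ℝ) ≤ ‖x - x ⊔ 0‖ := norm_nonneg _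
      have : ‖q - x ⊔ 0‖ = 0 := by nlinarith [norm_nonneg (q - x ⊔ 0), norm_nonneg (x - m)]
      have := norm_eq_zero.mp this
      exact sub_eq_zero.mp this
  · intro x y hxy
    exact sup_le (le_sup_left.trans' hxy) le_sup_right
  · intro x y
    apply sup_le
    · have h1 : x + y ≤ x ⊔ 0 + y := hadd x (x ⊔ 0) y le_sup_left
      have h2 : x ⊔ 0 + y ≤ x ⊔ 0 + (y ⊔ 0) := by
        have := hadd y (y ⊔ 0) (x ⊔ 0) le_sup_left
        simpa [add_comm] using this
      exact h1.trans h2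
    · exact haddpos _ _ le_sup_right le_sup_right
end

section
/- Let E be an inner product lattice. Then for every x ∈ E and every y ∈ E with 0 ≤ y, one has x⁻ ≤ |x - y| in E, and consequently ‖x - x⁺‖ = ‖x⁻‖ ≤ ‖x - y‖. -/
/-- In an inner product lattice, for `x ∈ E` and `0 ≤ y` one has `x⁻ ≤ |x - y|`,
and consequently `‖x - x⁺‖ = ‖x⁻‖ ≤ ‖x - y‖`. -/
theorem stmt_2 {E : Type*} [NormedAddCommGroup E] [InnerProductSpace ℝ E] [Lattice E]
    (hadd : ∀ x y z : E, x ≤ y → x + z ≤ y + z)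
    (hsmul : ∀ (t : ℝ) (x : E), 0 ≤ t → 0 ≤ x → 0 ≤ t • x)
    (hlat : ∀ x y : E, x ⊔ (-x) ≤ y ⊔ (-y) → ‖x‖ ≤ ‖y‖) :
    ∀ x y : E, 0 ≤ y →
      (-x) ⊔ 0 ≤ (x - y) ⊔ (-(x - y)) ∧
      ‖x - x ⊔ 0‖ = ‖(-x) ⊔ 0‖ ∧
      ‖(-x) ⊔ 0‖ ≤ ‖x - y‖ := by
  -- auxiliary facts
  have hneg : ∀ a b : E, a ≤ b → -b ≤ -a := by
    intro a b h
    have := hadd a b (-a + -b) h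
    have e1 : a + (-a + -b) = -b := by abel
    have e2 : b + (-a + -b) = -a := by abel
    rwa [e1, e2] at this
  have hsup_add : ∀ a b c : E, (a ⊔ b) + c = (a + c) ⊔ (b + c) := by
    intro a b c
    apply le_antisymm
    · have ha : a ≤ ((a + c) ⊔ (b + c)) + -c := by
        have := hadd (a + c) ((a + c) ⊔ (b + c)) (-c) le_sup_left
        simpa using this
      have hb : b ≤ ((a + c) ⊔ (b + c)) + -c := by
        have := hadd (b + c) ((a + c) ⊔ (b + c)) (-c) le_sup_right
        simpa using this
      have := hadd (a ⊔ b) (((a + c) ⊔ (b + c)) + -c) c (sup_le ha hb)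
      simpa using this
    · exact sup_le (hadd a (a ⊔ b) c le_sup_left) (hadd b (a ⊔ b) c le_sup_right)
  have habs_nonneg : ∀ z : E, (0 : E) ≤ z ⊔ (-z) := by
    intro z
    set a := z ⊔ (-z) with ha
    have h1 : z + (-z) ≤ a + (-z) := hadd z a (-z) le_sup_left
    have h2 : a + (-z) ≤ a + a := by
      have := hadd (-z) a a le_sup_right
      simpa [add_comm] using this
    have h0 : (0 : E) ≤ a + a := by simpa using h1.trans h2
    have h3 : (0 : E) ≤ ((1:ℝ)/2) • (a + a) := hsmul _ _ (by norm_num) h0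
    have e : ((1:ℝ)/2) • (a + a) = a := by
      rw [← two_smul ℝ a, smul_smul]; norm_num
    rwa [e] at h3
  intro x y hy
  -- part 1
  have hxy : x - y ≤ x := by
    have := hadd 0 y (x - y) hy
    have e1 : (0:E) + (x - y) = x - y := by abel
    have e2 : y + (x - y) = x := by abel
    rwa [e1, e2] at this
  have h1 : (-x) ⊔ 0 ≤ (x - y) ⊔ (-(x - y)) :=
    sup_le ((hneg _ _ hxy).trans le_sup_right) (habs_nonneg _)
  -- part 2
  have key : x - x ⊔ 0 = -((-x) ⊔ 0) := by
    have e : (-x ⊔ 0) + x = x ⊔ 0 := by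
      rw [hsup_add, neg_add_cancel, zero_add, sup_comm]
    rw [← e]; abel
  have h2 : ‖x - x ⊔ 0‖ = ‖(-x) ⊔ 0‖ := by rw [key, norm_neg]
  -- part 3
  have hae : ((-x) ⊔ 0) ⊔ (-((-x) ⊔ 0)) = (-x) ⊔ 0 := by
    apply sup_eq_left.2
    have : -((-x) ⊔ 0) ≤ 0 := by simpa using hneg 0 ((-x) ⊔ 0) le_sup_right
    exact this.trans le_sup_right
  have h3 : ‖(-x) ⊔ 0‖ ≤ ‖x - y‖ := hlat _ _ (by rw [hae]; exact h1)
  exact ⟨h1, h2, h3⟩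
end

section
/- Let E be a real vector lattice (a lattice-ordered real vector space) equipped with an inner product, and suppose that the positive cone E⁺ = {z ∈ E : 0 ≤ z} is a Chebyshev set in E (with respect to the norm induced by the inner product) and that the metric projection satisfies P_{E⁺}(x) = x⁺ for all x ∈ E. Then ⟨x, y⟩ ≥ 0 for all x, y ∈ E⁺. -/
open scoped RealInnerProductSpace

/-- If `E` is a vector lattice with an inner product whose positive cone is a Chebyshev
set with metric projection `P` satisfying `P x = x⁺`, then the inner product of two
positive elements is nonnegative. -/
theorem stmt_3 {E : Type*} [NormedAddCommGroup E] [InnerProductSpace ℝ E] [Lattice E]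
    (hadd : ∀ x y z : E, x ≤ y → x + z ≤ y + z)
    (hsmul : ∀ (t : ℝ) (x : E), 0 ≤ t → 0 ≤ x → 0 ≤ t • x)
    (P : E → E)
    (hP : ∀ x : E, IsBestApprox {z : E | 0 ≤ z} x (P x))
    (hPuniq : ∀ x q : E, IsBestApprox {z : E | 0 ≤ z} x q → q = P x)
    (hPpos : ∀ x : E, P x = x ⊔ 0) :
    ∀ x y : E, 0 ≤ x → 0 ≤ y → 0 ≤ ⟪x, y⟫ := by
  intro x y hx hy
  have hyneg : -y ≤ 0 := by
    have := hadd 0 y (-y) hy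
    simpa using this
  have hPy : P (-y) = 0 := by
    rw [hPpos, sup_eq_right.mpr hyneg]
  have hba := hP (-y)
  rw [hPy] at hba
  -- key inequality: for t ≥ 0, ‖y‖ ≤ ‖y + t • x‖
  have key : ∀ t : ℝ, 0 ≤ t → 0 ≤ 2 * t * ⟪x, y⟫ + t ^ 2 * ‖x‖ ^ 2 := by
    intro t ht
    have hz : (t • x) ∈ {z : E | 0 ≤ z} := hsmul t x ht hx
    have h := hba.2 (t • x) hz
    have h1 : ‖y‖ ≤ ‖y + t • x‖ := by
      have e1 : ‖-y - 0‖ = ‖y‖ := by simp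
      have e2 : ‖-y - t • x‖ = ‖y + t • x‖ := by
        rw [← norm_neg]; congr 1; abel
      rwa [e1, e2] at h
    have h2 : ‖y‖ ^ 2 ≤ ‖y + t • x‖ ^ 2 := by exact pow_le_pow_left₀ (norm_nonneg y) h1 2
    have hsm : ‖t • x‖ ^ 2 = t ^ 2 * ‖x‖ ^ 2 := by
      rw [norm_smul, Real.norm_eq_abs, mul_pow, sq_abs]
    have hexp := norm_add_sq_real y (t • x)
    rw [hsm, real_inner_smul_right] at hexp
    nlinarith [hexp, h2, real_inner_comm x y]
  by_contra hneg
  push_neg at hneg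
  have hx0 : ‖x‖ ≠ 0 := by
    intro h
    have : x = 0 := norm_eq_zero.mp h
    rw [this, inner_zero_left] at hneg
    exact absurd hneg (lt_irrefl 0)
  have hxpos : (0:ℝ) < ‖x‖ ^ 2 := by positivity
  set t := -⟪x, y⟫ / ‖x‖ ^ 2 with ht
  have htpos : 0 ≤ t := div_nonneg (by linarith) (le_of_lt hxpos)
  have hk := key t htpos
  have hval : 2 * t * ⟪x, y⟫ + t ^ 2 * ‖x‖ ^ 2 = -⟪x, y⟫ ^ 2 / ‖x‖ ^ 2 := by
    rw [ht]; field_simp; ring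
  rw [hval] at hk
  have hlt : -⟪x, y⟫ ^ 2 / ‖x‖ ^ 2 < 0 := by
    apply div_neg_of_neg_of_pos _ hxpos
    nlinarith [hneg]
  linarith
end

section
/- Let E be an inner product lattice. Then ⟨x⁺, x⁻⟩ = 0 for every x ∈ E, and consequently ‖|x|‖ = ‖x‖ for every x ∈ E. -/
open scoped RealInnerProductSpace

/-- In an inner product lattice, `⟨x⁺, x⁻⟩ = 0` and `‖|x|‖ = ‖x‖` for every `x`. -/
theorem stmt_4 {E : Type*} [NormedAddCommGroup E] [InnerProductSpace ℝ E] [Lattice E]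
    (hadd : ∀ x y z : E, x ≤ y → x + z ≤ y + z)
    (hsmul : ∀ (t : ℝ) (x : E), 0 ≤ t → 0 ≤ x → 0 ≤ t • x)
    (hlat : ∀ x y : E, x ⊔ (-x) ≤ y ⊔ (-y) → ‖x‖ ≤ ‖y‖) :
    ∀ x : E, ⟪x ⊔ 0, (-x) ⊔ 0⟫ = 0 ∧ ‖x ⊔ (-x)‖ = ‖x‖ := by
  -- translation is an order isomorphism
  have hle : ∀ x y z : E, x ≤ y ↔ x + z ≤ y + z := by
    intro x y z
    refine ⟨fun h => hadd x y z h, fun h => ?_⟩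
    have := hadd (x + z) (y + z) (-z) h
    simpa using this
  -- sup commutes with translation
  have hsup : ∀ x y z : E, (x ⊔ y) + z = (x + z) ⊔ (y + z) := by
    intro x y z
    apply le_antisymm
    · have hub : x ⊔ y ≤ ((x + z) ⊔ (y + z)) + -z := by
        apply sup_le
        · rw [hle x _ z]
          exact le_trans le_sup_left (le_of_eq (by abel))
        · rw [hle y _ z]
          exact le_trans le_sup_right (le_of_eq (by abel))
      have := hadd _ _ z hub
      simpa using this
    · exact sup_le (hadd x (x ⊔ y) z le_sup_left) (hadd y (x ⊔ y) z le_sup_right)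
  intro x
  -- x⁺ - x⁻ = x
  have hA : x + ((-x) ⊔ 0) = x ⊔ 0 := by
    rw [add_comm, hsup]
    simp [add_comm, sup_comm]
  have hdiff : (x ⊔ 0) - ((-x) ⊔ 0) = x := by rw [← hA]; abel
  -- 0 ≤ x ⊔ -x
  have habs_nonneg : (0 : E) ≤ x ⊔ (-x) := by
    have h2 : (0 : E) ≤ (x ⊔ -x) + (x ⊔ -x) := by
      have h1 : x + (-x) ≤ (x ⊔ -x) + (-x) := hadd x (x ⊔ -x) (-x) le_sup_left
      have h2' : (x ⊔ -x) + (-x) ≤ (x ⊔ -x) + (x ⊔ -x) := by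
        rw [add_comm (x ⊔ -x) (-x), add_comm (x ⊔ -x) (x ⊔ -x)]
        exact hadd (-x) (x ⊔ -x) (x ⊔ -x) le_sup_right
      have := le_trans h1 h2'
      simpa using this
    have h2s : (0 : E) ≤ (2 : ℝ) • (x ⊔ -x) := by rwa [two_smul]
    have := hsmul (1/2 : ℝ) ((2 : ℝ) • (x ⊔ -x)) (by norm_num) h2s
    rwa [smul_smul, show (1/2 : ℝ) * 2 = 1 by norm_num, one_smul] at this
  -- x⁺ + x⁻ = x ⊔ -x
  have hsum : (x ⊔ 0) + ((-x) ⊔ 0) = x ⊔ (-x) := by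
    rw [hsup, zero_add, hA, sup_sup_sup_comm x 0 (-x) 0, sup_idem]
    exact sup_eq_left.mpr habs_nonneg
  -- |x| ⊔ -|x| = x ⊔ -x
  have hD : (x ⊔ -x) ⊔ (-(x ⊔ -x)) = x ⊔ -x := by
    apply sup_eq_left.mpr
    have : -(x ⊔ -x) ≤ 0 := by
      have := hadd 0 (x ⊔ -x) (-(x ⊔ -x)) habs_nonneg
      simpa using this
    exact le_trans this habs_nonneg
  -- ‖|x|‖ = ‖x‖
  have hnorm : ‖x ⊔ (-x)‖ = ‖x‖ := by
    apply le_antisymm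
    · exact hlat (x ⊔ -x) x (le_of_eq hD)
    · exact hlat x (x ⊔ -x) (le_of_eq hD.symm)
  refine ⟨?_, hnorm⟩
  -- polarization
  have e1 := real_inner_eq_norm_add_mul_self_sub_norm_mul_self_sub_norm_mul_self_div_two
    (x ⊔ 0) ((-x) ⊔ 0)
  have e2 := real_inner_eq_norm_mul_self_add_norm_mul_self_sub_norm_sub_mul_self_div_two
    (x ⊔ 0) ((-x) ⊔ 0)
  rw [hsum, hnorm] at e1
  rw [hdiff] at e2
  have : ⟪x ⊔ 0, (-x) ⊔ 0⟫ + ⟪x ⊔ 0, (-x) ⊔ 0⟫ = 0 := by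
    nth_rewrite 1 [e1]
    nth_rewrite 1 [e2]
    ring
  linarith [this]
end

section
/- Let E be an inner product lattice. Then ⟨x, y⟩ ≥ 0 for all x, y ∈ E with 0 ≤ x and 0 ≤ y. -/
open scoped RealInnerProductSpace

/-- In an inner product lattice, the inner product of two positive elements is
nonnegative. -/
theorem stmt_5 {E : Type*} [NormedAddCommGroup E] [InnerProductSpace ℝ E] [Lattice E]
    (hadd : ∀ x y z : E, x ≤ y → x + z ≤ y + z)
    (hsmul : ∀ (t : ℝ) (x : E), 0 ≤ t → 0 ≤ x → 0 ≤ t • x)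
    (hlat : ∀ x y : E, x ⊔ (-x) ≤ y ⊔ (-y) → ‖x‖ ≤ ‖y‖) :
    ∀ x y : E, 0 ≤ x → 0 ≤ y → 0 ≤ ⟪x, y⟫ := by
  intro x y hx hy
  have hny : -y ≤ y := by
    have h0 := hadd 0 y (-y) hy
    simp at h0
    exact h0.trans hy
  have hnx : -x ≤ x := by
    have h0 := hadd 0 x (-x) hx
    simp at h0
    exact h0.trans hx
  have h1 : x - y ≤ x + y := by
    have := hadd (-y) y x hny
    simpa [sub_eq_add_neg, add_comm] using this
  have h2 : -(x - y) ≤ x + y := by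
    have := hadd (-x) x y hnx
    simpa [neg_sub, sub_eq_add_neg, add_comm] using this
  have hxy : (0 : E) ≤ x + y := by
    have := hadd 0 x y hx
    simp at this
    calc (0 : E) ≤ y := hy
    _ ≤ x + y := this
  have hsup : (x - y) ⊔ (-(x - y)) ≤ (x + y) ⊔ (-(x + y)) :=
    (sup_le h1 h2).trans le_sup_left
  have hn : ‖x - y‖ ≤ ‖x + y‖ := hlat _ _ hsup
  have e1 : ‖x + y‖ ^ 2 = ‖x‖ ^ 2 + 2 * ⟪x, y⟫ + ‖y‖ ^ 2 := by
    rw [← real_inner_self_eq_norm_sq, ← real_inner_self_eq_norm_sq,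
      ← real_inner_self_eq_norm_sq, inner_add_add_self]
    ring_nf
    rw [real_inner_comm y x]
    ring
  have e2 : ‖x - y‖ ^ 2 = ‖x‖ ^ 2 - 2 * ⟪x, y⟫ + ‖y‖ ^ 2 := by
    rw [← real_inner_self_eq_norm_sq, ← real_inner_self_eq_norm_sq,
      ← real_inner_self_eq_norm_sq, inner_sub_sub_self]
    ring_nf
    rw [real_inner_comm y x]
    ring
  nlinarith [norm_nonneg (x - y), norm_nonneg (x + y)]
end

section
/- Let E be a real inner product space that is also an ordered vector space whose order is directed, and suppose the positive cone E⁺ = {z ∈ E : 0 ≤ z} is a Chebyshev set in E with metric projection P = P_{E⁺}. If P is subadditive (P(x+y) ≤ P(x) + P(y) for all x, y ∈ E), then x ≤ P(x) for every x ∈ E. -/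
/-- If the positive cone of a directed ordered inner product space is a Chebyshev set and
the metric projection `P` is subadditive, then `x ≤ P x` for every `x`. -/
theorem stmt_6 {E : Type*} [NormedAddCommGroup E] [InnerProductSpace ℝ E] [PartialOrder E]
    (hadd : ∀ x y z : E, x ≤ y → x + z ≤ y + z)
    (hsmul : ∀ (t : ℝ) (x : E), 0 ≤ t → 0 ≤ x → 0 ≤ t • x)
    (hdir : ∀ x y : E, ∃ z : E, x ≤ z ∧ y ≤ z)
    (P : E → E)
    (hP : ∀ x : E, IsBestApprox {z : E | 0 ≤ z} x (P x))
    (hPuniq : ∀ x q : E, IsBestApprox {z : E | 0 ≤ z} x q → q = P x)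
    (hsub : ∀ x y : E, P (x + y) ≤ P x + P y) :
    ∀ x : E, x ≤ P x := by
  -- P fixes nonnegative elements
  have hfix : ∀ v : E, 0 ≤ v → P v = v := by
    intro v hv
    exact (hPuniq v v ⟨hv, fun y _ => by simp⟩).symm
  intro x
  obtain ⟨z, hxz, hz0⟩ := hdir x 0
  -- v := z - x ≥ 0
  have hv : (0 : E) ≤ z - x := by
    have := hadd x z (-x) hxz
    simpa [sub_eq_add_neg] using this
  have h1 : P (x + (z - x)) ≤ P x + P (z - x) := hsub x (z - x)
  rw [add_sub_cancel, hfix z hz0, hfix (z - x) hv] at h1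
  have h2 := hadd z (P x + (z - x)) (-(z - x)) h1
  simpa [add_assoc] using h2
end

section
/- Let E be a real inner product space that is also an ordered vector space whose order is directed, and suppose the positive cone E⁺ = {z ∈ E : 0 ≤ z} is a Chebyshev set in E with metric projection P = P_{E⁺}. If P is isotone and subadditive, then for every x ∈ E the element P(x) is the least upper bound of {x, 0}; in particular, every pair of elements of E has a supremum, so E is a vector lattice with x⁺ = P(x). -/
/-- If the positive cone of a directed ordered inner product space is a Chebyshev set and
the metric projection `P` is isotone and subadditive, then `P x` is the least upper bound
of `{x, 0}`; in particular every pair of elements has a supremum. -/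
theorem stmt_8 {E : Type*} [NormedAddCommGroup E] [InnerProductSpace ℝ E] [PartialOrder E]
    (hadd : ∀ x y z : E, x ≤ y → x + z ≤ y + z)
    (hsmul : ∀ (t : ℝ) (x : E), 0 ≤ t → 0 ≤ x → 0 ≤ t • x)
    (hdir : ∀ x y : E, ∃ z : E, x ≤ z ∧ y ≤ z)
    (P : E → E)
    (hP : ∀ x : E, IsBestApprox {z : E | 0 ≤ z} x (P x))
    (hPuniq : ∀ x q : E, IsBestApprox {z : E | 0 ≤ z} x q → q = P x)
    (hiso : ∀ x y : E, x ≤ y → P x ≤ P y)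
    (hsub : ∀ x y : E, P (x + y) ≤ P x + P y) :
    (∀ x : E, IsLUB {x, 0} (P x)) ∧ (∀ x y : E, ∃ s : E, IsLUB {x, y} s) := by
  -- elements of the cone are fixed by P
  have hfix : ∀ w : E, 0 ≤ w → P w = w := by
    intro w hw
    refine (hPuniq w w ⟨hw, ?_⟩).symm
    intro y _
    simp
  -- x ≤ P x
  have hub : ∀ x : E, x ≤ P x := by
    intro x
    obtain ⟨w, hxw, h0w⟩ := hdir x 0
    have h1 : (0:E) ≤ w - x := by
      have := hadd x w (-x) hxw
      simpa [sub_eq_add_neg] using this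
    have h2 : w ≤ (w - x) + P x := by
      have hs := hsub (w - x) x
      rw [sub_add_cancel] at hs
      calc w = P w := (hfix w h0w).symm
        _ ≤ P (w - x) + P x := hs
        _ = (w - x) + P x := by rw [hfix _ h1]
    have h3 := hadd w ((w - x) + P x) (x - w) h2
    have e1 : w + (x - w) = x := by abel
    have e2 : (w - x) + P x + (x - w) = P x := by abel
    rwa [e1, e2] at h3
  have hlub : ∀ x : E, IsLUB {x, 0} (P x) := by
    intro x
    constructor
    · rintro z (rfl | rfl)
      · exact hub z
      · exact (hP x).1
    · intro z hz
      have hxz : x ≤ z := hz (Set.mem_insert _ _)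
      have h0z : (0:E) ≤ z := hz (Set.mem_insert_of_mem _ rfl)
      calc P x ≤ P z := hiso x z hxz
        _ = z := hfix z h0z
  refine ⟨hlub, fun x y => ⟨P (x - y) + y, ?_⟩⟩
  constructor
  · rintro z (rfl | rfl)
    · have := hadd (z - y) (P (z - y)) y (hub (z - y))
      simpa using this
    · have := hadd 0 (P (x - z)) z (hP (x - z)).1
      simpa using this
  · intro z hz
    have hxz : x ≤ z := hz (Set.mem_insert _ _)
    have hyz : y ≤ z := hz (Set.mem_insert_of_mem _ rfl)
    have h1 : x - y ≤ z - y := by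
      have := hadd x z (-y) hxz
      simpa [sub_eq_add_neg] using this
    have h2 : (0:E) ≤ z - y := by
      have := hadd y z (-y) hyz
      simpa [sub_eq_add_neg] using this
    have h3 : P (x - y) ≤ z - y := by
      calc P (x - y) ≤ P (z - y) := hiso _ _ h1
        _ = z - y := hfix _ h2
    have := hadd (P (x - y)) (z - y) y h3
    simpa using this
end

section
/- Let E be a real inner product space that is also an ordered vector space whose order is directed, and suppose the positive cone E⁺ = {z ∈ E : 0 ≤ z} is a Chebyshev set in E with metric projection P = P_{E⁺} which is isotone and subadditive. Then for every x ∈ E one has ⟨P(x), P(-x)⟩ = 0 and ‖P(x) + P(-x)‖ = ‖x‖. -/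
open scoped RealInnerProductSpace

/-- If the positive cone of a directed ordered inner product space is a Chebyshev set and
the metric projection `P` is isotone and subadditive, then `⟨P x, P (-x)⟩ = 0` and
`‖P x + P (-x)‖ = ‖x‖` for every `x`. -/
theorem stmt_9 {E : Type*} [NormedAddCommGroup E] [InnerProductSpace ℝ E] [PartialOrder E]
    (hadd : ∀ x y z : E, x ≤ y → x + z ≤ y + z)
    (hsmul : ∀ (t : ℝ) (x : E), 0 ≤ t → 0 ≤ x → 0 ≤ t • x)
    (hdir : ∀ x y : E, ∃ z : E, x ≤ z ∧ y ≤ z)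
    (P : E → E)
    (hP : ∀ x : E, IsBestApprox {z : E | 0 ≤ z} x (P x))
    (hPuniq : ∀ x q : E, IsBestApprox {z : E | 0 ≤ z} x q → q = P x)
    (hiso : ∀ x y : E, x ≤ y → P x ≤ P y)
    (hsub : ∀ x y : E, P (x + y) ≤ P x + P y) :
    ∀ x : E, ⟪P x, P (-x)⟫ = 0 ∧ ‖P x + P (-x)‖ = ‖x‖ := by
  -- the cone is closed under addition
  have hCadd : ∀ a b : E, 0 ≤ a → 0 ≤ b → 0 ≤ a + b := by
    intro a b ha hb
    calc (0:E) ≤ b := hb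
      _ = 0 + b := (zero_add b).symm
      _ ≤ a + b := hadd 0 a b ha
  have hPpos : ∀ x : E, (0:E) ≤ P x := fun x => (hP x).1
  -- P fixes the cone
  have hPid : ∀ z : E, 0 ≤ z → P z = z := by
    intro z hz
    refine (hPuniq z z ⟨hz, ?_⟩).symm
    intro y hy
    simp
  have hP0 : P 0 = 0 := hPid 0 le_rfl
  -- variational inequality
  have hvar : ∀ x w : E, 0 ≤ w → ⟪x - P x, w - P x⟫ ≤ 0 := by
    intro x w hw
    by_contra hcon
    push_neg at hcon
    set a := ⟪x - P x, w - P x⟫ with ha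
    set c := ‖w - P x‖^2 with hc
    have key : ∀ t : ℝ, 0 < t → t ≤ 1 → 2*a ≤ t*c := by
      intro t ht ht1
      have hmem : (0:E) ≤ P x + t • (w - P x) := by
        have heq : P x + t • (w - P x) = (1 - t) • P x + t • w := by module
        rw [heq]
        exact hCadd _ _ (hsmul _ _ (by linarith) (hPpos x)) (hsmul _ _ ht.le hw)
      have hba := (hP x).2 _ hmem
      have hsq : ‖x - P x‖^2 ≤ ‖x - (P x + t•(w - P x))‖^2 :=
        pow_le_pow_left₀ (norm_nonneg _) hba 2
      have hexp : ‖x - (P x + t•(w - P x))‖^2 = ‖x - P x‖^2 - 2*(t*a) + t^2*c := by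
        have heq : x - (P x + t•(w - P x)) = (x - P x) - t•(w - P x) := by abel
        rw [heq, norm_sub_sq_real, real_inner_smul_right, norm_smul]
        simp only [Real.norm_eq_abs, mul_pow, sq_abs]
        try ring
      nlinarith [hsq, hexp, ht]
    rcases le_or_gt c 0 with hc0 | hc0
    · have := key 1 one_pos le_rfl; linarith
    · have h1 := key (min 1 (a/c)) (lt_min one_pos (div_pos hcon hc0)) (min_le_left _ _)
      have h2 : min 1 (a/c) * c ≤ (a/c)*c :=
        mul_le_mul_of_nonneg_right (min_le_right _ _) hc0.le
      rw [div_mul_cancel₀ _ (ne_of_gt hc0)] at h2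
      linarith
  -- orthogonality
  have horth : ∀ x : E, ⟪x - P x, P x⟫ = 0 := by
    intro x
    have h1 := hvar x 0 le_rfl
    have h2 := hvar x (P x + P x) (hCadd _ _ (hPpos x) (hPpos x))
    rw [zero_sub, inner_neg_right] at h1
    rw [show P x + P x - P x = P x by abel] at h2
    linarith
  -- subduality of the cone
  have hsubdual : ∀ u v : E, 0 ≤ u → 0 ≤ v → 0 ≤ ⟪u, v⟫ := by
    intro u v hu hv
    have hneg : -v ≤ (0:E) := by
      have := hadd 0 v (-v) hv
      simpa using this
    have hPneg : P (-v) = 0 := by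
      refine le_antisymm ?_ (hPpos (-v))
      have := hiso (-v) 0 hneg
      rwa [hP0] at this
    have h := hvar (-v) u hu
    rw [hPneg, sub_zero, sub_zero, inner_neg_left] at h
    rw [real_inner_comm]
    linarith
  -- x ≤ P x
  have hle : ∀ x : E, x ≤ P x := by
    intro x
    obtain ⟨z, hxz, hz0⟩ := hdir x 0
    have hzx : (0:E) ≤ z - x := by
      have := hadd x z (-x) hxz
      simpa [sub_eq_add_neg] using this
    have h1 : z ≤ P x + (z - x) := by
      have h2 := hsub x (z - x)
      rw [show x + (z - x) = z by abel, hPid z hz0, hPid (z - x) hzx] at h2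
      exact h2
    have h3 := hadd z (P x + (z - x)) (x - z) h1
    rw [show z + (x - z) = x by abel, show P x + (z - x) + (x - z) = P x by abel] at h3
    exact h3
  -- key identity : P (-x) = P x - x
  have hkey : ∀ x : E, P (-x) = P x - x := by
    intro x
    refine (hPuniq (-x) (P x - x) ⟨?_, ?_⟩).symm
    · show (0:E) ≤ P x - x
      have := hadd x (P x) (-x) (hle x)
      simpa [sub_eq_add_neg] using this
    · intro y hy
      have hy' : (0:E) ≤ y := hy
      have hPxy : 0 ≤ ⟪P x, y⟫ := hsubdual _ _ (hPpos x) hy'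
      have h := horth x
      rw [inner_sub_left] at h
      have hcomm : ⟪P x, x⟫ = ⟪x, P x⟫ := real_inner_comm _ _
      have hd : ⟪P x, y - (P x - x)⟫ = ⟪P x, y⟫ := by
        rw [inner_sub_right, inner_sub_right]
        have hpp : ⟪P x, P x⟫ = ⟪x, P x⟫ := by linarith
        linarith
      have hexp : ‖-x - y‖^2 = ‖P x‖^2 + 2*⟪P x, y⟫ + ‖y - (P x - x)‖^2 := by
        have heq : -x - y = -(P x) - (y - (P x - x)) := by abel
        rw [heq, norm_sub_sq_real, norm_neg, inner_neg_left, hd]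
        ring
      rw [show -x - (P x - x) = -(P x) by abel, norm_neg]
      nlinarith [norm_nonneg (-x - y), norm_nonneg (P x), sq_nonneg ‖y - (P x - x)‖]
  intro x
  have hk := hkey x
  have h := horth x
  rw [inner_sub_left] at h
  have hcomm : ⟪P x, x⟫ = ⟪x, P x⟫ := real_inner_comm _ _
  have hpp : ⟪P x, P x⟫ = ‖P x‖^2 := real_inner_self_eq_norm_sq _
  constructor
  · rw [hk, inner_sub_right]
    linarith
  · rw [hk]
    have hsq : ‖P x + (P x - x)‖^2 = ‖x‖^2 := by
      rw [norm_add_sq_real, norm_sub_sq_real, inner_sub_right]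
      linarith
    calc ‖P x + (P x - x)‖ = Real.sqrt (‖P x + (P x - x)‖^2) :=
          (Real.sqrt_sq (norm_nonneg _)).symm
      _ = Real.sqrt (‖x‖^2) := by rw [hsq]
      _ = ‖x‖ := Real.sqrt_sq (norm_nonneg _)
end

section
/- Let E be a real inner product space that is also an ordered vector space whose order is directed, and suppose the positive cone E⁺ = {z ∈ E : 0 ≤ z} is a Chebyshev set in E with metric projection P = P_{E⁺} which is isotone and subadditive. Then whenever 0 ≤ x ≤ y in E, one has ‖x‖ ≤ ‖y‖. -/
/-!
If `0` is the metric projection of `-v` onto the positive cone, the variational inequality for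
best approximations from a cone gives `⟪v, a⟫ ≥ 0` for every `a ≥ 0`. Isotonicity of `P`
provides exactly this for `v ≥ 0`, since `-v ≤ 0` forces `0 ≤ P (-v) ≤ P 0 = 0`. Then for
`0 ≤ x ≤ y` both `y - x` and `y + x` are positive, and `‖y‖² - ‖x‖² = ⟪y - x, y + x⟫ ≥ 0`.
-/

open RealInnerProductSpace

theorem IsBestApprox.eq_self_of_mem {E : Type*} [NormedAddCommGroup E] {A : Set E} {x p : E}
    (h : IsBestApprox A x p) (hx : x ∈ A) : p = x := by
  have := h.2 x hx
  rw [sub_self, norm_zero, norm_sub_rev] at this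
  exact sub_eq_zero.mp (norm_le_zero_iff.mp this)

theorem IsBestApprox.inner_nonpos_of_zero {E : Type*} [NormedAddCommGroup E]
    [InnerProductSpace ℝ E] {A : Set E} {x a : E} (h : IsBestApprox A x 0)
    (ha : ∀ t : ℝ, 0 ≤ t → t • a ∈ A) : ⟪x, a⟫ ≤ 0 := by
  by_contra! hpos
  have ha0 : a ≠ 0 := by rintro rfl; simp at hpos
  have hna : 0 < ‖a‖ ^ 2 := by positivity
  -- `t` minimises `‖x - t • a‖` over `t ≥ 0`.
  set t := ⟪x, a⟫ / ‖a‖ ^ 2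
  have ht : t * ‖a‖ ^ 2 = ⟪x, a⟫ := div_mul_cancel₀ _ hna.ne'
  have hle : ‖x‖ ^ 2 ≤ ‖x - t • a‖ ^ 2 := by
    have := h.2 _ (ha t (by positivity))
    rw [sub_zero] at this
    gcongr
  rw [norm_sub_sq_real, real_inner_smul_right, norm_smul, Real.norm_eq_abs,
    abs_of_nonneg (by positivity : 0 ≤ t)] at hle
  nlinarith

theorem proj_eq_zero_of_nonpos {E : Type*} [NormedAddCommGroup E] [PartialOrder E] {P : E → E}
    (hP : ∀ x : E, IsBestApprox {z : E | 0 ≤ z} x (P x)) (hiso : Monotone P) {x : E}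
    (hx : x ≤ 0) : P x = 0 := by
  have hP0 : P 0 = 0 := (hP 0).eq_self_of_mem le_rfl
  exact le_antisymm (hP0 ▸ hiso hx) (hP x).1

section PositiveCone

variable {E : Type*} [NormedAddCommGroup E] [InnerProductSpace ℝ E] [PartialOrder E]
  [IsOrderedAddMonoid E] [PosSMulMono ℝ E] {P : E → E}

theorem inner_nonneg_of_proj_monotone (hP : ∀ x : E, IsBestApprox {z : E | 0 ≤ z} x (P x))
    (hiso : Monotone P) {v a : E} (hv : 0 ≤ v) (ha : 0 ≤ a) : 0 ≤ ⟪v, a⟫ := by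
  have hbest : IsBestApprox {z : E | 0 ≤ z} (-v) 0 :=
    proj_eq_zero_of_nonpos hP hiso (neg_nonpos.mpr hv) ▸ hP (-v)
  have := hbest.inner_nonpos_of_zero fun t ht => smul_nonneg ht ha
  rwa [inner_neg_left, neg_nonpos] at this

theorem norm_le_norm_of_proj_monotone (hP : ∀ x : E, IsBestApprox {z : E | 0 ≤ z} x (P x))
    (hiso : Monotone P) {x y : E} (hx : 0 ≤ x) (hxy : x ≤ y) : ‖x‖ ≤ ‖y‖ := by
  have hinner : 0 ≤ ⟪y - x, y + x⟫ :=
    inner_nonneg_of_proj_monotone hP hiso (sub_nonneg.mpr hxy) (add_nonneg (hx.trans hxy) hx)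
  have hdiff : ⟪y - x, y + x⟫ = ‖y‖ ^ 2 - ‖x‖ ^ 2 := by
    rw [inner_sub_left, inner_add_right, inner_add_right, real_inner_self_eq_norm_sq,
      real_inner_self_eq_norm_sq, real_inner_comm x y]
    ring
  rw [hdiff, sub_nonneg] at hinner
  exact pow_le_pow_iff_left₀ (norm_nonneg x) (norm_nonneg y) two_ne_zero |>.mp hinner

end PositiveCone

theorem stmt_10_general {E : Type*} [NormedAddCommGroup E] [InnerProductSpace ℝ E] [PartialOrder E]
    (hadd : ∀ x y z : E, x ≤ y → x + z ≤ y + z)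
    (hsmul : ∀ (t : ℝ) (x : E), 0 ≤ t → 0 ≤ x → 0 ≤ t • x)
    (P : E → E)
    (hP : ∀ x : E, IsBestApprox {z : E | 0 ≤ z} x (P x))
    (hiso : ∀ x y : E, x ≤ y → P x ≤ P y) :
    ∀ x y : E, 0 ≤ x → x ≤ y → ‖x‖ ≤ ‖y‖ := by
  have : IsOrderedAddMonoid E := { add_le_add_left := fun x y h z => hadd x y z h }
  have : PosSMulMono ℝ E := .of_smul_nonneg fun t ht x hx => hsmul t x ht hx
  exact fun _ _ => norm_le_norm_of_proj_monotone hP hiso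

/-- If the positive cone of a directed ordered inner product space is a Chebyshev set and
the metric projection `P` is isotone and subadditive, then `0 ≤ x ≤ y` implies
`‖x‖ ≤ ‖y‖`. -/
theorem stmt_10 {E : Type*} [NormedAddCommGroup E] [InnerProductSpace ℝ E] [PartialOrder E]
    (hadd : ∀ x y z : E, x ≤ y → x + z ≤ y + z)
    (hsmul : ∀ (t : ℝ) (x : E), 0 ≤ t → 0 ≤ x → 0 ≤ t • x)
    (hdir : ∀ x y : E, ∃ z : E, x ≤ z ∧ y ≤ z)
    (P : E → E)
    (hP : ∀ x : E, IsBestApprox {z : E | 0 ≤ z} x (P x))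
    (hPuniq : ∀ x q : E, IsBestApprox {z : E | 0 ≤ z} x q → q = P x)
    (hiso : ∀ x y : E, x ≤ y → P x ≤ P y)
    (hsub : ∀ x y : E, P (x + y) ≤ P x + P y) :
    ∀ x y : E, 0 ≤ x → x ≤ y → ‖x‖ ≤ ‖y‖ :=
  stmt_10_general hadd hsmul P hP hiso
end

section
/- Let E be a real vector lattice (a lattice-ordered real vector space) equipped with an inner product such that ⟨x, y⟩ ≥ 0 for all x, y ∈ E⁺ and ⟨x⁺, x⁻⟩ = 0 for all x ∈ E. Then the induced norm is a lattice norm: for all x, y ∈ E, |x| ≤ |y| implies ‖x‖ ≤ ‖y‖. -/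
open scoped RealInnerProductSpace

/-- If `E` is a vector lattice with an inner product such that positive elements have
nonnegative inner products and `⟨x⁺, x⁻⟩ = 0` for all `x`, then the induced norm is a
lattice norm. -/
theorem stmt_11 {E : Type*} [NormedAddCommGroup E] [InnerProductSpace ℝ E] [Lattice E]
    (hadd : ∀ x y z : E, x ≤ y → x + z ≤ y + z)
    (hsmul : ∀ (t : ℝ) (x : E), 0 ≤ t → 0 ≤ x → 0 ≤ t • x)
    (hpos : ∀ x y : E, 0 ≤ x → 0 ≤ y → 0 ≤ ⟪x, y⟫)
    (horth : ∀ x : E, ⟪x ⊔ 0, (-x) ⊔ 0⟫ = 0) :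
    ∀ x y : E, x ⊔ (-x) ≤ y ⊔ (-y) → ‖x‖ ≤ ‖y‖ := by
  -- basic order-group facts
  have hsub : ∀ x y : E, x ≤ y → (0 : E) ≤ y - x := by
    intro x y h
    have := hadd x y (-x) h
    simpa [sub_eq_add_neg] using this
  have haddle : ∀ x y : E, (0 : E) ≤ y - x → x ≤ y := by
    intro x y h
    have := hadd 0 (y - x) x h
    simpa using this
  have hsm : ∀ (t : ℝ) (x y : E), 0 ≤ t → x ≤ y → t • x ≤ t • y := by
    intro t x y ht h
    apply haddle
    have := hsmul t (y - x) ht (hsub _ _ h)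
    simpa [smul_sub] using this
  -- translation of sup
  have hsup : ∀ a b z : E, (a + z) ⊔ (b + z) = (a ⊔ b) + z := by
    intro a b z
    apply le_antisymm
    · exact sup_le (hadd _ _ z le_sup_left) (hadd _ _ z le_sup_right)
    · have h1 : a ≤ ((a + z) ⊔ (b + z)) + (-z) := by
        have := hadd (a + z) ((a + z) ⊔ (b + z)) (-z) le_sup_left
        simpa [add_assoc] using this
      have h2 : b ≤ ((a + z) ⊔ (b + z)) + (-z) := by
        have := hadd (b + z) ((a + z) ⊔ (b + z)) (-z) le_sup_right
        simpa [add_assoc] using this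
      have := hadd (a ⊔ b) (((a + z) ⊔ (b + z)) + (-z)) z (sup_le h1 h2)
      simpa [add_assoc] using this
  -- scaling of sup
  have hsupsmul : ∀ (t : ℝ) (a b : E), 0 < t → t • (a ⊔ b) = (t • a) ⊔ (t • b) := by
    intro t a b ht
    apply le_antisymm
    · have h1 : a ⊔ b ≤ t⁻¹ • ((t • a) ⊔ (t • b)) := by
        apply sup_le
        · have := hsm t⁻¹ (t • a) ((t • a) ⊔ (t • b)) (by positivity) le_sup_left
          simpa [smul_smul, inv_mul_cancel₀ ht.ne'] using this
        · have := hsm t⁻¹ (t • b) ((t • a) ⊔ (t • b)) (by positivity) le_sup_right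
          simpa [smul_smul, inv_mul_cancel₀ ht.ne'] using this
      have := hsm t _ _ ht.le h1
      simpa [smul_smul, mul_inv_cancel₀ ht.ne'] using this
    · exact sup_le (hsm t a _ ht.le le_sup_left) (hsm t b _ ht.le le_sup_right)
  -- decomposition x = x⁺ - x⁻, |x| = x⁺ + x⁻
  have hdec : ∀ x : E, x = (x ⊔ 0) - ((-x) ⊔ 0) := by
    intro x
    have h := hsup (-x) 0 x
    simp only [neg_add_cancel, zero_add] at h
    -- h : 0 ⊔ x = ((-x) ⊔ 0) + x
    rw [sup_comm] at h
    rw [h]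
    abel
  have habs : ∀ x : E, x ⊔ (-x) = (x ⊔ 0) + ((-x) ⊔ 0) := by
    intro x
    have h := hsup ((2 : ℝ) • (-x)) 0 x
    have h2 : (2 : ℝ) • (-x) + x = -x := by
      rw [two_smul]; abel
    rw [h2, zero_add] at h
    -- h : (-x) ⊔ x = ((2•(-x)) ⊔ 0) + x
    have h3 : ((2 : ℝ) • (-x)) ⊔ 0 = (2 : ℝ) • ((-x) ⊔ 0) := by
      rw [hsupsmul 2 (-x) 0 (by norm_num), smul_zero]
    rw [h3] at h
    rw [sup_comm] at h
    rw [h, two_smul]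
    nth_rewrite 3 [hdec x]
    abel
  -- norm of x equals norm of |x|
  have hnorm : ∀ x : E, ‖x‖ = ‖x ⊔ (-x)‖ := by
    intro x
    rw [norm_eq_sqrt_real_inner, norm_eq_sqrt_real_inner]
    congr 1
    have hx : ⟪x, x⟫ = ⟪(x ⊔ 0) - ((-x) ⊔ 0), (x ⊔ 0) - ((-x) ⊔ 0)⟫ := by
      rw [← hdec x]
    rw [habs x, hx, real_inner_sub_sub_self, real_inner_add_add_self, horth x]
    ring
  -- positivity facts
  have habsnn : ∀ x : E, (0 : E) ≤ x ⊔ (-x) := by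
    intro x
    rw [habs x]
    have h1 : (0 : E) ≤ x ⊔ 0 := le_sup_right
    have h2 : (0 : E) ≤ (-x) ⊔ 0 := le_sup_right
    calc (0 : E) = 0 + 0 := by rw [add_zero]
    _ ≤ (x ⊔ 0) + 0 := hadd _ _ _ h1
    _ ≤ (x ⊔ 0) + ((-x) ⊔ 0) := by
        rw [add_comm _ (0 : E), add_comm _ (((-x)) ⊔ 0)]
        exact hadd _ _ _ h2
  intro x y h
  set a := x ⊔ (-x) with ha
  set b := y ⊔ (-y) with hb
  have h1 : (0 : E) ≤ b - a := hsub _ _ h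
  have h2 : (0 : E) ≤ b + a := by
    calc (0 : E) = 0 + 0 := by rw [add_zero]
    _ ≤ b + 0 := hadd _ _ _ ((habsnn x).trans h)
    _ ≤ b + a := by
        rw [add_comm b (0 : E), add_comm b a]
        exact hadd _ _ _ (habsnn x)
  have h3 : (0 : ℝ) ≤ ⟪b - a, b + a⟫ := hpos _ _ h1 h2
  have h4 : ⟪b - a, b + a⟫ = ⟪b, b⟫ - ⟪a, a⟫ := by
    rw [inner_sub_left, inner_add_right, inner_add_right, real_inner_comm a b]
    ring
  have h5 : ⟪a, a⟫ ≤ ⟪b, b⟫ := by rw [h4] at h3; linarith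
  rw [hnorm x, hnorm y, norm_eq_sqrt_real_inner, norm_eq_sqrt_real_inner]
  exact Real.sqrt_le_sqrt h5
end
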